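/- Let d ≥ 3 and let |ψ⟩ = |φ²⟩⊗|φ¹³⟩ be a pure state on ℂ^d⊗ℂ^d⊗ℂ^d separable across the bipartition 2|13, with Bloch expansions as usual. Define G = u vᵗ where u = (1, T^{(2)})ᵗ with T^{(2)} the full Bloch vector of |φ²⟩ (so ‖T^{(2)}‖² = 2(d−1)/d), and v = (1, (1/2)T^{(1̃)}, (1/2)T^{(1̃3)})ᵗ where T^{(1̃)} consists of the components t_i^{1} for i = d(d+1)/2,…,d²−1 and T^{(1̃3)} = T^{(1̃)}(T^{(3)})ᵗ (vectorized). Then ‖G‖_tr ≤ √((15d³ − 13d² − 4d + 4)/(2d³)). -/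

import Mathlib

/-!
Since `G = u vᵗ` has rank one, `‖G‖_tr = ‖u‖ ‖v‖`, and
`‖u‖² = 1 + ‖T⁽²⁾‖²`, `‖v‖² = 1 + ‖T⁽¹̃⁾‖²/4 + ‖T⁽¹̃⁾‖²‖T⁽³⁾‖²/4` with `‖T⁽¹̃⁾‖ ≤ ‖T⁽¹⁾‖`.
Every single-party Bloch vector `T` of a pure state satisfies `‖T‖² ≤ 2(d-1)/d`: for the
reduced state `ρ`, expanding `0 ≤ tr D²` with `D = ρ - 1/d - ½ ∑ tᵢ λᵢ` (Bessel's inequality for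
the Hilbert–Schmidt inner product) gives `1/d + ‖T‖²/2 ≤ tr ρ²`, and `tr ρ² ≤ (tr ρ)² = 1` by
submultiplicativity of the Frobenius norm.
-/

open Matrix
open scoped ComplexOrder Kronecker

noncomputable def traceNorm {𝕜 : Type*} [RCLike 𝕜] {m n : Type*} [Fintype m] [Fintype n]
    [DecidableEq n] (B : Matrix m n 𝕜) : ℝ :=
  RCLike.re (((Matrix.posSemidef_conjTranspose_mul_self B).1.eigenvectorUnitary : Matrix n n 𝕜) *
    Matrix.diagonal ((fun x : ℝ => (x : 𝕜)) ∘ (fun x : ℝ => √x) ∘ (Matrix.posSemidef_conjTranspose_mul_self B).1.eigenvalues) *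
    (star (Matrix.posSemidef_conjTranspose_mul_self B).1.eigenvectorUnitary : Matrix n n 𝕜)).trace

variable {𝕜 : Type*} [RCLike 𝕜]

section TraceNorm

variable {m n : Type*} [Fintype m] [Fintype n] [DecidableEq n]

open scoped MatrixOrder in
theorem traceNorm_eq_re_trace_of_mul_self_eq {B : Matrix m n 𝕜} {P : Matrix n n 𝕜}
    (hP : P.PosSemidef) (hPP : P * P = Bᴴ * B) : traceNorm B = RCLike.re P.trace := by
  have hsqrt : cfc Real.sqrt (Bᴴ * B) = P := by
    rw [← cfcₙ_eq_cfc, ← CFC.sqrt_eq_real_sqrt _ (posSemidef_conjTranspose_mul_self B).nonneg]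
    exact CFC.sqrt_unique hPP hP.nonneg
  rw [traceNorm, ← hsqrt, (posSemidef_conjTranspose_mul_self B).1.cfc_eq, IsHermitian.cfc,
    Unitary.conjStarAlgAut_apply]

omit [DecidableEq n] in
theorem star_dotProduct_self_eq (v : n → 𝕜) : star v ⬝ᵥ v = ((∑ i, ‖v i‖ ^ 2 : ℝ) : 𝕜) := by
  simp [dotProduct, RCLike.conj_mul]

theorem traceNorm_vecMulVec (u : m → 𝕜) (v : n → 𝕜) :
    traceNorm (vecMulVec u v) = √(∑ i, ‖u i‖ ^ 2) * √(∑ j, ‖v j‖ ^ 2) := by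
  set a := √(∑ i, ‖u i‖ ^ 2)
  set b := √(∑ j, ‖v j‖ ^ 2)
  have ha : a ^ 2 = ∑ i, ‖u i‖ ^ 2 := Real.sq_sqrt (by positivity)
  have hb : b ^ 2 = ∑ j, ‖v j‖ ^ 2 := Real.sq_sqrt (by positivity)
  rcases eq_or_ne b 0 with hb0 | hb0
  · have hv : v = 0 := by
      have hsum : ∑ j, ‖v j‖ ^ 2 = 0 := by rw [← hb, hb0, sq, zero_mul]
      ext j
      simpa using (Finset.sum_eq_zero_iff_of_nonneg fun j _ => by positivity).1 hsum j
        (Finset.mem_univ j)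
    subst hv
    simpa [b] using traceNorm_eq_re_trace_of_mul_self_eq (B := vecMulVec u (0 : n → 𝕜))
      PosSemidef.zero (by simp)
  -- the square root of `Bᴴ B = ‖u‖² · v̄ vᵗ` is `(‖u‖/‖v‖) · v̄ vᵗ`
  have hP : (((a / b : ℝ) : 𝕜) • vecMulVec (star v) v).PosSemidef :=
    (posSemidef_vecMulVec_star_self v).smul (by positivity)
  rw [traceNorm_eq_re_trace_of_mul_self_eq hP]
  · rw [trace_smul, trace_vecMulVec, star_dotProduct_self_eq, ← hb, smul_eq_mul,
      ← RCLike.ofReal_mul, RCLike.ofReal_re]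
    field_simp
  · rw [conjTranspose_vecMulVec, smul_mul_smul_comm, vecMulVec_mul_vecMulVec,
      vecMulVec_mul_vecMulVec, dotProduct_comm v, star_dotProduct_self_eq,
      star_dotProduct_self_eq, ← ha, ← hb, vecMulVec_smul, vecMulVec_smul, smul_smul]
    congr 1
    have hb0' : (b : 𝕜) ≠ 0 := RCLike.ofReal_ne_zero.2 hb0
    push_cast
    field_simp

end TraceNorm

section Bloch

variable {m n N : Type*} [Fintype m] [Fintype n] [Fintype N]

theorem trace_mul_conjTranspose_self (A : Matrix m n 𝕜) :
    (A * Aᴴ).trace = ((∑ i, ∑ j, ‖A i j‖ ^ 2 : ℝ) : 𝕜) := by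
  simp [trace, mul_apply, RCLike.mul_conj]

section Frobenius

attribute [local instance] Matrix.frobeniusSeminormedAddCommGroup

theorem frobenius_norm_sq (A : Matrix m n 𝕜) : ‖A‖ ^ 2 = ∑ i, ∑ j, ‖A i j‖ ^ 2 := by
  rw [frobenius_norm_def, ← Real.rpow_natCast, ← Real.rpow_mul (by positivity)]
  norm_num

theorem re_trace_mul_self_le_sq (M : Matrix m n 𝕜) :
    RCLike.re (M * Mᴴ * (M * Mᴴ)).trace ≤ RCLike.re (M * Mᴴ).trace ^ 2 := by
  have hρ : (M * Mᴴ)ᴴ = M * Mᴴ := (isHermitian_mul_conjTranspose_self M).eq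
  calc RCLike.re (M * Mᴴ * (M * Mᴴ)).trace = ‖M * Mᴴ‖ ^ 2 := by
        rw [show M * Mᴴ * (M * Mᴴ) = M * Mᴴ * (M * Mᴴ)ᴴ by rw [hρ],
          trace_mul_conjTranspose_self, RCLike.ofReal_re, frobenius_norm_sq]
    _ ≤ (‖M‖ * ‖Mᴴ‖) ^ 2 := by gcongr; exact frobenius_norm_mul M Mᴴ
    _ = RCLike.re (M * Mᴴ).trace ^ 2 := by
        rw [frobenius_norm_conjTranspose, ← sq, frobenius_norm_sq, trace_mul_conjTranspose_self,
          RCLike.ofReal_re]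

end Frobenius

variable [DecidableEq n] [DecidableEq N] {lam : N → Matrix n n 𝕜}

theorem sum_sq_bloch_le (hherm : ∀ i, (lam i).IsHermitian) (htr : ∀ i, (lam i).trace = 0)
    (horth : ∀ i j, (lam i * lam j).trace = if i = j then 2 else 0)
    {ρ : Matrix n n 𝕜} (hρ : ρ.IsHermitian) (hρtr : ρ.trace = 1) {t : N → ℝ}
    (ht : ∀ i, (t i : 𝕜) = (ρ * lam i).trace) :
    ∑ i, t i ^ 2 ≤ 2 * (RCLike.re (ρ * ρ).trace - 1 / Fintype.card n) := by
  have hn : (Fintype.card n : 𝕜) ≠ 0 := by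
    intro h
    have : IsEmpty n := Fintype.card_eq_zero_iff.1 (by exact_mod_cast h)
    simp [trace] at hρtr
  set S : Matrix n n 𝕜 := ∑ i, ((t i / 2 : ℝ) : 𝕜) • lam i
  set D : Matrix n n 𝕜 := ρ - (Fintype.card n : 𝕜)⁻¹ • 1 - S
  have htrS (A : Matrix n n 𝕜) :
      (A * S).trace = ∑ i, ((t i / 2 : ℝ) : 𝕜) * (A * lam i).trace := by
    simp [S, Matrix.mul_sum, trace_sum]
  have hρS : (ρ * S).trace = ((∑ i, t i ^ 2 / 2 : ℝ) : 𝕜) := by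
    rw [htrS]
    push_cast
    exact Finset.sum_congr rfl fun i _ => by rw [← ht]; ring
  have hSS : (S * S).trace = ((∑ i, t i ^ 2 / 2 : ℝ) : 𝕜) := by
    rw [htrS]
    push_cast
    refine Finset.sum_congr rfl fun i _ => ?_
    rw [trace_mul_comm, htrS]
    simp only [horth, mul_ite, mul_zero, Finset.sum_ite_eq, Finset.mem_univ, ↓reduceIte]
    push_cast
    ring
  have hS : S.trace = 0 := by simp [S, trace_sum, htr]
  have hD : D.IsHermitian := by
    simp [D, S, IsHermitian, conjTranspose_sum, (hherm _).eq, hρ.eq]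
  have hDD : (D * D).trace =
      (ρ * ρ).trace - (Fintype.card n : 𝕜)⁻¹ - ((∑ i, t i ^ 2 / 2 : ℝ) : 𝕜) := by
    simp only [D, sub_mul, mul_sub, Matrix.smul_mul, Matrix.mul_smul, one_mul, mul_one, smul_smul,
      trace_sub, trace_smul, trace_one, trace_mul_comm S ρ, hρS, hSS, hS, hρtr, smul_eq_mul]
    field_simp
    ring
  have hnonneg : 0 ≤ RCLike.re (D * D).trace := by
    rw [show D * D = D * Dᴴ by rw [hD.eq], trace_mul_conjTranspose_self, RCLike.ofReal_re]
    positivity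
  rw [hDD, map_sub, map_sub, RCLike.ofReal_re, ← RCLike.ofReal_natCast, ← RCLike.ofReal_inv,
    RCLike.ofReal_re, ← Finset.sum_div] at hnonneg
  rw [one_div]
  linarith

theorem sum_sq_bloch_le_of_pure (hherm : ∀ i, (lam i).IsHermitian)
    (htr : ∀ i, (lam i).trace = 0)
    (horth : ∀ i j, (lam i * lam j).trace = if i = j then 2 else 0)
    {M : Matrix n m 𝕜} (hM : ∑ a, ∑ b, ‖M a b‖ ^ 2 = 1) {t : N → ℝ}
    (ht : ∀ i, (t i : 𝕜) = (M * Mᴴ * lam i).trace) :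
    ∑ i, t i ^ 2 ≤ 2 * (Fintype.card n - 1) / Fintype.card n := by
  have hρtr : (M * Mᴴ).trace = 1 := by rw [trace_mul_conjTranspose_self, hM, RCLike.ofReal_one]
  have hpure : RCLike.re (M * Mᴴ * (M * Mᴴ)).trace ≤ 1 := by
    simpa [hρtr] using re_trace_mul_self_le_sq M
  have hn : (Fintype.card n : ℝ) ≠ 0 := by
    have : Nonempty n := by
      by_contra h
      simp [not_nonempty_iff.1 h] at hM
    positivity
  have hbloch := sum_sq_bloch_le hherm htr horth (isHermitian_mul_conjTranspose_self M) hρtr ht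
  calc ∑ i, t i ^ 2 ≤ 2 * (1 - 1 / Fintype.card n) := by linarith
    _ = 2 * (Fintype.card n - 1) / Fintype.card n := by field_simp

end Bloch

section PartialTrace

variable {p q : Type*} [Fintype p] [Fintype q] [DecidableEq p] [DecidableEq q]

omit [DecidableEq p] in
theorem trace_vecMulVec_star_mul_kronecker_one (φ : p × q → 𝕜) (A : Matrix p p 𝕜) :
    (vecMulVec φ (star φ) * (A ⊗ₖ (1 : Matrix q q 𝕜))).trace =
      (of (Function.curry φ) * (of (Function.curry φ))ᴴ * A).trace := by
  simp only [trace, diag_apply, mul_apply, vecMulVec_apply, Pi.star_apply, RCLike.star_def,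
    kroneckerMap_apply, one_apply, mul_ite, mul_one, mul_zero, Fintype.sum_prod_type,
    Finset.sum_ite_eq', Finset.mem_univ, ↓reduceIte, of_apply, Function.curry_apply,
    conjTranspose_apply, Finset.sum_mul]
  exact Finset.sum_congr rfl fun _ _ => Finset.sum_comm

omit [DecidableEq q] in
theorem trace_vecMulVec_star_mul_one_kronecker (φ : p × q → 𝕜) (A : Matrix q q 𝕜) :
    (vecMulVec φ (star φ) * ((1 : Matrix p p 𝕜) ⊗ₖ A)).trace =
      ((of (Function.curry φ))ᵀ * (of (Function.curry φ))ᵀᴴ * A).trace := by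
  simp only [trace, diag_apply, mul_apply, vecMulVec_apply, Pi.star_apply, RCLike.star_def,
    kroneckerMap_apply, one_apply, ite_mul, one_mul, zero_mul, mul_ite, mul_zero,
    Fintype.sum_prod_type, Finset.sum_ite_irrel, Finset.sum_const_zero, Finset.sum_ite_eq',
    Finset.mem_univ, ↓reduceIte, transpose_apply, of_apply, Function.curry_apply,
    conjTranspose_apply, Finset.sum_mul]
  exact Finset.sum_comm.trans (Finset.sum_congr rfl fun _ _ => Finset.sum_comm)

end PartialTrace

theorem one_add_mul_le_of_bloch_bounds {d x y z : ℝ} (hd : 1 ≤ d) (hx : x ≤ 2 * (d - 1) / d)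
    (hy₀ : 0 ≤ y) (hy : y ≤ 2 * (d - 1) / d) (hz₀ : 0 ≤ z) (hz : z ≤ 2 * (d - 1) / d) :
    (1 + x) * (1 + y / 4 + y * z / 4) ≤ (15 * d ^ 3 - 13 * d ^ 2 - 4 * d + 4) / (2 * d ^ 3) := by
  set K := 2 * (d - 1) / d with hK
  have hK₀ : 0 ≤ K := div_nonneg (by linarith) (by linarith)
  have hyz : y * z ≤ K * K := mul_le_mul hy hz hz₀ hK₀
  calc (1 + x) * (1 + y / 4 + y * z / 4) ≤ (1 + K) * (1 + K / 4 + K * K / 4) := by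
        gcongr ?_ * ?_ <;> nlinarith
    -- the paper's constant exceeds this exact value by `2(3d-2)(d-1)/d³`
    _ = (15 * d ^ 3 - 25 * d ^ 2 + 16 * d - 4) / (2 * d ^ 3) := by
        rw [hK]; field_simp; ring
    _ ≤ (15 * d ^ 3 - 13 * d ^ 2 - 4 * d + 4) / (2 * d ^ 3) := by
        gcongr; nlinarith

theorem traceNorm_G_2_13_le_general {d : ℕ}
    (φ2 : Fin d → ℂ) (φ13 : Fin d × Fin d → ℂ)
    (hφ2 : ∑ i, ‖φ2 i‖ ^ 2 = 1) (hφ13 : ∑ v, ‖φ13 v‖ ^ 2 = 1)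
    (lam : Fin (d ^ 2 - 1) → Matrix (Fin d) (Fin d) ℂ)
    (hherm : ∀ i, (lam i).IsHermitian)
    (htraceless : ∀ i, (lam i).trace = 0)
    (horth : ∀ i j, (lam i * lam j).trace = if i = j then 2 else 0)
    (t1 t2 t3 : Fin (d ^ 2 - 1) → ℝ)
    (ht2 : ∀ i, (t2 i : ℂ) = (Matrix.vecMulVec φ2 (star φ2) * lam i).trace)
    (ht1 : ∀ i, (t1 i : ℂ) =
      (Matrix.vecMulVec φ13 (star φ13) * (lam i ⊗ₖ (1 : Matrix (Fin d) (Fin d) ℂ))).trace)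
    (ht3 : ∀ i, (t3 i : ℂ) =
      (Matrix.vecMulVec φ13 (star φ13) * ((1 : Matrix (Fin d) (Fin d) ℂ) ⊗ₖ lam i)).trace)
    -- `u = (1, T^{(2)})`, `v = (1, ½T^{(1̃)}, ½ vec(T^{(1̃)}(T^{(3)})ᵗ))`
    (u : Unit ⊕ Fin (d ^ 2 - 1) → ℝ)
    (hu : u = Sum.elim (fun _ => 1) t2)
    (v : Unit ⊕ ({i : Fin (d ^ 2 - 1) // d * (d + 1) / 2 ≤ (i : ℕ) + 1} ⊕
      {i : Fin (d ^ 2 - 1) // d * (d + 1) / 2 ≤ (i : ℕ) + 1} × Fin (d ^ 2 - 1)) → ℝ)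
    (hv : v = Sum.elim (fun _ => 1)
      (Sum.elim (fun i => t1 i.1 / 2) (fun p => t1 p.1.1 * t3 p.2 / 2)))
    (G : Matrix (Unit ⊕ Fin (d ^ 2 - 1))
      (Unit ⊕ ({i : Fin (d ^ 2 - 1) // d * (d + 1) / 2 ≤ (i : ℕ) + 1} ⊕
        {i : Fin (d ^ 2 - 1) // d * (d + 1) / 2 ≤ (i : ℕ) + 1} × Fin (d ^ 2 - 1))) ℝ)
    (hG : G = Matrix.vecMulVec u v) :
    traceNorm G ≤
      Real.sqrt ((15 * (d : ℝ) ^ 3 - 13 * d ^ 2 - 4 * d + 4) / (2 * d ^ 3)) := by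
  have hd : (1 : ℝ) ≤ d := Nat.one_le_cast.2 (Nat.one_le_iff_ne_zero.2 (by rintro rfl; simp at hφ2))
  have hT2 : ∑ i, t2 i ^ 2 ≤ 2 * (d - 1) / d := by
    simpa using sum_sq_bloch_le_of_pure hherm htraceless horth (M := replicateCol Unit φ2)
      (by simpa using hφ2) fun i => by
        rw [conjTranspose_replicateCol, ← vecMulVec_eq]; exact ht2 i
  have hT1 : ∑ i, t1 i ^ 2 ≤ 2 * (d - 1) / d := by
    simpa using sum_sq_bloch_le_of_pure hherm htraceless horth (M := of (Function.curry φ13))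
      (by simpa [Fintype.sum_prod_type] using hφ13)
      fun i => by rw [← trace_vecMulVec_star_mul_kronecker_one]; exact ht1 i
  have hT3 : ∑ i, t3 i ^ 2 ≤ 2 * (d - 1) / d := by
    simpa using sum_sq_bloch_le_of_pure hherm htraceless horth (M := (of (Function.curry φ13))ᵀ)
      (by rw [Finset.sum_comm]; simpa [Fintype.sum_prod_type] using hφ13)
      fun i => by rw [← trace_vecMulVec_star_mul_one_kronecker]; exact ht3 i
  have hT1' : ∑ i : {i : Fin (d ^ 2 - 1) // d * (d + 1) / 2 ≤ (i : ℕ) + 1}, t1 i ^ 2 ≤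
      ∑ i, t1 i ^ 2 :=
    (le_add_of_nonneg_right (Finset.sum_nonneg fun _ _ => sq_nonneg _)).trans_eq
      (Fintype.sum_subtype_add_sum_subtype _ fun i => t1 i ^ 2)
  subst hG hu hv
  rw [traceNorm_vecMulVec, ← Real.sqrt_mul (by positivity)]
  refine Real.sqrt_le_sqrt ?_
  simp only [Real.norm_eq_abs, sq_abs, Fintype.sum_sum_type, Fintype.sum_prod_type, Sum.elim_inl,
    Sum.elim_inr, Finset.univ_unique, Finset.sum_singleton, one_pow, div_pow, mul_pow,
    ← Finset.sum_mul_sum, ← Finset.sum_div]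
  convert one_add_mul_le_of_bloch_bounds hd hT2 (by positivity) (hT1'.trans hT1) (by positivity)
    hT3 using 2
  ring

/-- Lemma 2(b) of the paper: for a pure state on `ℂ^d⊗ℂ^d⊗ℂ^d` separable across
`2|13`, the matrix `G_{2|13} = u vᵗ` satisfies
`‖G‖_tr ≤ √((15d³−13d²−4d+4)/(2d³))`. -/
theorem traceNorm_G_2_13_le {d : ℕ} (hd : 3 ≤ d)
    (φ2 : Fin d → ℂ) (φ13 : Fin d × Fin d → ℂ)
    (hφ2 : ∑ i, ‖φ2 i‖ ^ 2 = 1) (hφ13 : ∑ v, ‖φ13 v‖ ^ 2 = 1)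
    (lam : Fin (d ^ 2 - 1) → Matrix (Fin d) (Fin d) ℂ)
    (hherm : ∀ i, (lam i).IsHermitian)
    (htraceless : ∀ i, (lam i).trace = 0)
    (horth : ∀ i j, (lam i * lam j).trace = if i = j then 2 else 0)
    (t1 t2 t3 : Fin (d ^ 2 - 1) → ℝ)
    (ht2 : ∀ i, (t2 i : ℂ) = (Matrix.vecMulVec φ2 (star φ2) * lam i).trace)
    (ht1 : ∀ i, (t1 i : ℂ) =
      (Matrix.vecMulVec φ13 (star φ13) * (lam i ⊗ₖ (1 : Matrix (Fin d) (Fin d) ℂ))).trace)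
    (ht3 : ∀ i, (t3 i : ℂ) =
      (Matrix.vecMulVec φ13 (star φ13) * ((1 : Matrix (Fin d) (Fin d) ℂ) ⊗ₖ lam i)).trace)
    -- `u = (1, T^{(2)})`, `v = (1, ½T^{(1̃)}, ½ vec(T^{(1̃)}(T^{(3)})ᵗ))`
    (u : Unit ⊕ Fin (d ^ 2 - 1) → ℝ)
    (hu : u = Sum.elim (fun _ => 1) t2)
    (v : Unit ⊕ ({i : Fin (d ^ 2 - 1) // d * (d + 1) / 2 ≤ (i : ℕ) + 1} ⊕
      {i : Fin (d ^ 2 - 1) // d * (d + 1) / 2 ≤ (i : ℕ) + 1} × Fin (d ^ 2 - 1)) → ℝ)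
    (hv : v = Sum.elim (fun _ => 1)
      (Sum.elim (fun i => t1 i.1 / 2) (fun p => t1 p.1.1 * t3 p.2 / 2)))
    (G : Matrix (Unit ⊕ Fin (d ^ 2 - 1))
      (Unit ⊕ ({i : Fin (d ^ 2 - 1) // d * (d + 1) / 2 ≤ (i : ℕ) + 1} ⊕
        {i : Fin (d ^ 2 - 1) // d * (d + 1) / 2 ≤ (i : ℕ) + 1} × Fin (d ^ 2 - 1))) ℝ)
    (hG : G = Matrix.vecMulVec u v) :
    traceNorm G ≤
      Real.sqrt ((15 * (d : ℝ) ^ 3 - 13 * d ^ 2 - 4 * d + 4) / (2 * d ^ 3)) :=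
  traceNorm_G_2_13_le_general φ2 φ13 hφ2 hφ13 lam hherm htraceless horth t1 t2 t3 ht2 ht1 ht3 u hu v
    hv G hG
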